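/- arXiv:1805.07855 — 13 statements merged into one kernel-verified Lean document; each statement's English description precedes it below -/
import Mathlib

section
/- For any integer r ≥ 6, T(r)² − 2·T(r−1)² − 3·T(r−2)² − 6·T(r−3)² + T(r−4)² + T(r−6)² = 0, where T is any sequence satisfying the Tribonacci recurrence with arbitrary initial values. -/
open Finset

theorem stmt0 (T : ℕ → ℤ) (hT : ∀ n, 3 ≤ n → T n = T (n-1) + T (n-2) + T (n-3)) :
    ∀ r, 6 ≤ r → (T r)^2 - 2*(T (r-1))^2 - 3*(T (r-2))^2 - 6*(T (r-3))^2 + (T (r-4))^2 + (T (r-6))^2 = 0 := by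
  intro r hr
  obtain ⟨n, rfl⟩ := Nat.exists_eq_add_of_le hr
  have h3 : T (n+3) = T (n+2) + T (n+1) + T n := by simpa using hT (n+3) (by omega)
  have h4 : T (n+4) = T (n+3) + T (n+2) + T (n+1) := by simpa using hT (n+4) (by omega)
  have h5 : T (n+5) = T (n+4) + T (n+3) + T (n+2) := by simpa using hT (n+5) (by omega)
  have h6 : T (n+6) = T (n+5) + T (n+4) + T (n+3) := by simpa using hT (n+6) (by omega)
  rw [show 6+n-1 = n+5 by omega, show 6+n-2 = n+4 by omega, show 6+n-3 = n+3 by omega,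
    show 6+n-4 = n+2 by omega, show 6+n-6 = n by omega, show 6+n = n+6 by omega]
  rw [h6, h5, h4, h3]
  ring
end

section
/- For any sequence T satisfying the Tribonacci recurrence and any r ≥ 7, 8·T(r−1)·T(r−3) = 4·T(r)² + 2·T(r−3)² − T(r+1)² + 4·T(r−4)² − T(r−7)². -/
open Finset

theorem stmt5 (T : ℕ → ℤ) (hT : ∀ n, 3 ≤ n → T n = T (n-1) + T (n-2) + T (n-3)) :
    ∀ r, 7 ≤ r → 8*T (r-1)*T (r-3) = 4*(T r)^2 + 2*(T (r-3))^2 - (T (r+1))^2 + 4*(T (r-4))^2 - (T (r-7))^2 := by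
  intro r hr
  obtain ⟨k, rfl⟩ : ∃ k, r = k + 7 := ⟨r - 7, by omega⟩
  have e3 := hT (k+3) (by omega)
  have e4 := hT (k+4) (by omega)
  have e5 := hT (k+5) (by omega)
  have e6 := hT (k+6) (by omega)
  have e7 := hT (k+7) (by omega)
  have e8 := hT (k+8) (by omega)
  simp only [show k+3-1 = k+2 by omega, show k+3-2 = k+1 by omega, show k+3-3 = k by omega,
    show k+4-1 = k+3 by omega, show k+4-2 = k+2 by omega, show k+4-3 = k+1 by omega,
    show k+5-1 = k+4 by omega, show k+5-2 = k+3 by omega, show k+5-3 = k+2 by omega,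
    show k+6-1 = k+5 by omega, show k+6-2 = k+4 by omega, show k+6-3 = k+3 by omega,
    show k+7-1 = k+6 by omega, show k+7-2 = k+5 by omega, show k+7-3 = k+4 by omega,
    show k+8-1 = k+7 by omega, show k+8-2 = k+6 by omega, show k+8-3 = k+5 by omega] at e3 e4 e5 e6 e7 e8
  simp only [show k+7-1 = k+6 by omega, show k+7-3 = k+4 by omega, show k+7-4 = k+3 by omega,
    show k+7-7 = k by omega, show k+7+1 = k+8 by omega]
  rw [e8, e7, e6, e5, e4, e3]; ring
end

section
/- For any sequence T satisfying the Tribonacci recurrence and any r ≥ 8, T(r+2)² − 4·T(r+1)² + T(r)² + 14·T(r−2)² − 4·T(r−3)² − 2·T(r−4)² − 8·T(r−5)² + T(r−6)² + T(r−8)² = 0. -/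
open Finset

theorem stmt6 (T : ℕ → ℤ) (hT : ∀ n, 3 ≤ n → T n = T (n-1) + T (n-2) + T (n-3)) :
    ∀ r, 8 ≤ r → (T (r+2))^2 - 4*(T (r+1))^2 + (T r)^2 + 14*(T (r-2))^2 - 4*(T (r-3))^2 - 2*(T (r-4))^2 - 8*(T (r-5))^2 + (T (r-6))^2 + (T (r-8))^2 = 0 := by
  intro r hr
  obtain ⟨k, rfl⟩ := Nat.exists_eq_add_of_le hr
  have e : ∀ m : ℕ, T (k+(m+3)) = T (k+(m+2)) + T (k+(m+1)) + T (k+m) := by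
    intro m
    have h := hT (k+(m+3)) (by omega)
    rw [show k+(m+3)-1 = k+(m+2) from by omega, show k+(m+3)-2 = k+(m+1) from by omega,
      show k+(m+3)-3 = k+m from by omega] at h
    exact h
  have e0 : T (k+3) = T (k+2) + T (k+1) + T k := by simpa using e 0
  have e1 : T (k+4) = T (k+3) + T (k+2) + T (k+1) := e 1
  have e2 : T (k+5) = T (k+4) + T (k+3) + T (k+2) := e 2
  have e3 : T (k+6) = T (k+5) + T (k+4) + T (k+3) := e 3
  have e4 : T (k+7) = T (k+6) + T (k+5) + T (k+4) := e 4
  have e5 : T (k+8) = T (k+7) + T (k+6) + T (k+5) := e 5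
  have e6 : T (k+9) = T (k+8) + T (k+7) + T (k+6) := e 6
  have e7 : T (k+10) = T (k+9) + T (k+8) + T (k+7) := e 7
  rw [show 8+k+2 = k+10 from by omega, show 8+k+1 = k+9 from by omega,
    show 8+k = k+8 from by omega, show k+8-2 = k+6 from by omega,
    show k+8-3 = k+5 from by omega, show k+8-4 = k+4 from by omega,
    show k+8-5 = k+3 from by omega, show k+8-6 = k+2 from by omega,
    show k+8-8 = k from by omega, e7, e6, e5, e4, e3, e2, e1, e0]
  ring
end

section
/- For any sequence T satisfying the Tribonacci recurrence and any r ≥ 6, T(r+3)² − 3·T(r+2)² − 4·T(r)² + 2·T(r−1)² − 10·T(r−2)² − 4·T(r−3)² + T(r−5)² + T(r−6)² = 0. -/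
open Finset

theorem stmt7 (T : ℕ → ℤ) (hT : ∀ n, 3 ≤ n → T n = T (n-1) + T (n-2) + T (n-3)) :
    ∀ r, 6 ≤ r → (T (r+3))^2 - 3*(T (r+2))^2 - 4*(T r)^2 + 2*(T (r-1))^2 - 10*(T (r-2))^2 - 4*(T (r-3))^2 + (T (r-5))^2 + (T (r-6))^2 = 0 := by
  have hk : ∀ n, T (n+3) = T (n+2) + T (n+1) + T n := by
    intro n
    have h := hT (n+3) (by omega)
    have e1 : n + 3 - 1 = n + 2 := by omega
    have e2 : n + 3 - 2 = n + 1 := by omega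
    have e3 : n + 3 - 3 = n := by omega
    rw [e1, e2, e3] at h
    exact h
  intro r hr
  obtain ⟨m, rfl⟩ := Nat.exists_eq_add_of_le hr
  have e1 : 6 + m - 1 = m + 5 := by omega
  have e2 : 6 + m - 2 = m + 4 := by omega
  have e3 : 6 + m - 3 = m + 3 := by omega
  have e5 : 6 + m - 5 = m + 1 := by omega
  have e6 : 6 + m - 6 = m := by omega
  have e0 : 6 + m = m + 6 := by omega
  have e7 : m + 6 + 2 = m + 8 := by omega
  have e8 : m + 6 + 3 = m + 9 := by omega
  rw [e1, e2, e3, e5, e6, e0, e7, e8]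
  have h3 := hk m
  have h4 := hk (m+1)
  have h5 := hk (m+2)
  have h6 := hk (m+3)
  have h7 := hk (m+4)
  have h8 := hk (m+5)
  have h9 := hk (m+6)
  have n4 : m+1+3 = m+4 := by omega
  have n5 : m+2+3 = m+5 := by omega
  have n6 : m+3+3 = m+6 := by omega
  have n7 : m+4+3 = m+7 := by omega
  have n8 : m+5+3 = m+8 := by omega
  have n9 : m+6+3 = m+9 := by omega
  simp only [n4, n5, n6, n7, n8, n9, show m+1+2 = m+3 from by omega,
    show m+2+2 = m+4 from by omega, show m+3+2 = m+5 from by omega,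
    show m+4+2 = m+6 from by omega, show m+5+2 = m+7 from by omega,
    show m+6+2 = m+8 from by omega, show m+2+1 = m+3 from by omega,
    show m+3+1 = m+4 from by omega, show m+4+1 = m+5 from by omega,
    show m+5+1 = m+6 from by omega, show m+6+1 = m+7 from by omega] at h3 h4 h5 h6 h7 h8 h9
  rw [h9, h8, h7, h6, h5, h4, h3]
  ring
end

section
/- For any sequence T satisfying the Tribonacci recurrence and any r ≥ 7, T(r+1)² − 4·T(r)² + 2·T(r−2)² + 16·T(r−3)² + 4·T(r−4)² − 2·T(r−6)² − T(r−7)² = 0. -/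
open Finset

theorem stmt8 (T : ℕ → ℤ) (hT : ∀ n, 3 ≤ n → T n = T (n-1) + T (n-2) + T (n-3)) :
    ∀ r, 7 ≤ r → (T (r+1))^2 - 4*(T r)^2 + 2*(T (r-2))^2 + 16*(T (r-3))^2 + 4*(T (r-4))^2 - 2*(T (r-6))^2 - (T (r-7))^2 = 0 := by
  intro r hr
  obtain ⟨k, rfl⟩ : ∃ k, r = k + 7 := ⟨r - 7, by omega⟩
  have e : ∀ m, T (m+3) = T (m+2) + T (m+1) + T m := by
    intro m
    have := hT (m+3) (by omega)
    simpa using this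
  have h3 := e k
  have h4 := e (k+1)
  have h5 := e (k+2)
  have h6 := e (k+3)
  have h7 := e (k+4)
  have h8 := e (k+5)
  have s2 : k + 7 - 2 = k + 5 := by omega
  have s3 : k + 7 - 3 = k + 4 := by omega
  have s4 : k + 7 - 4 = k + 3 := by omega
  have s6 : k + 7 - 6 = k + 1 := by omega
  have s7 : k + 7 - 7 = k := by omega
  rw [s2, s3, s4, s6, s7]
  have e8 : k + 7 + 1 = k + 5 + 3 := by omega
  have e7 : k + 7 = k + 4 + 3 := by omega
  rw [e8, e7]
  rw [h8, h7, h6, h5, h4, h3] at *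
  ring_nf
end

section
/- For any sequence T satisfying the Tribonacci recurrence and any r ≥ 6, T(r+2)² − 2·T(r+1)² − 2·T(r)² − 8·T(r−1)² − 2·T(r−2)² − 6·T(r−3)² + 2·T(r−4)² + T(r−6)² = 0. -/
open Finset

theorem stmt9 (T : ℕ → ℤ) (hT : ∀ n, 3 ≤ n → T n = T (n-1) + T (n-2) + T (n-3)) :
    ∀ r, 6 ≤ r → (T (r+2))^2 - 2*(T (r+1))^2 - 2*(T r)^2 - 8*(T (r-1))^2 - 2*(T (r-2))^2 - 6*(T (r-3))^2 + 2*(T (r-4))^2 + (T (r-6))^2 = 0 := by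
  intro r hr
  obtain ⟨m, rfl⟩ := le_iff_exists_add.mp hr
  have e : ∀ k, T (m + k + 3) = T (m + k + 2) + T (m + k + 1) + T (m + k) := by
    intro k
    have h := hT (m + k + 3) (by omega)
    have h1 : m + k + 3 - 1 = m + k + 2 := by omega
    have h2 : m + k + 3 - 2 = m + k + 1 := by omega
    have h3 : m + k + 3 - 3 = m + k := by omega
    rw [h1, h2, h3] at h
    exact h
  have i0 : 6 + m + 2 = m + 5 + 3 := by omega
  have i1 : 6 + m + 1 = m + 4 + 3 := by omega
  have i2 : 6 + m = m + 3 + 3 := by omega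
  have i3 : 6 + m - 1 = m + 2 + 3 := by omega
  have i4 : 6 + m - 2 = m + 1 + 3 := by omega
  have i5 : 6 + m - 3 = m + 0 + 3 := by omega
  have i6 : 6 + m - 4 = m + 2 := by omega
  have i7 : 6 + m - 6 = m := by omega
  rw [i3, i4, i5, i6, i7, i0, i1, i2, e 5, e 4, e 3, e 2, e 1, e 0]
  simp only [show m+0+2=m+2 from by omega, show m+0+1=m+1 from by omega,
    show m+0=m from by omega, show m+1+1=m+2 from by omega]
  ring
end

section
/- For the Tribonacci sequence T with T(0)=0, T(1)=1, T(2)=1, and any k ≥ 5: 8·∑_{j=0}^{k} T(j)² = 9·T(k)² + 7·T(k−1)² + 4·T(k−2)² − 2·T(k−3)² − T(k−4)² − T(k−5)² + 2. -/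
/-!
Once `a (n+3), …, a (n+6)` are expressed through `a n, a (n+1), a (n+2)` by the recurrence,
`a (n+6)^2 = 2 a (n+5)^2 + 3 a (n+4)^2 + 6 a (n+3)^2 - a (n+2)^2 - a n^2` is a polynomial
identity. Hence the gap between `8 ∑ a j^2` and the quadratic form in the last six terms is a
conserved quantity of any sequence with the Tribonacci recurrence; for the Tribonacci numbers
its value is `-2`.
-/

open Finset

section TribonacciRecurrence

variable {R : Type*} [CommRing R] {a : ℕ → R}

theorem sq_add_six_of_tribonacci_rec (ha : ∀ n, a (n + 3) = a (n + 2) + a (n + 1) + a n)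
    (n : ℕ) :
    a (n + 6) ^ 2 = 2 * a (n + 5) ^ 2 + 3 * a (n + 4) ^ 2 + 6 * a (n + 3) ^ 2
      - a (n + 2) ^ 2 - a n ^ 2 := by
  have h6 : a (n + 6) = a (n + 5) + a (n + 4) + a (n + 3) := ha (n + 3)
  have h5 : a (n + 5) = a (n + 4) + a (n + 3) + a (n + 2) := ha (n + 2)
  have h4 : a (n + 4) = a (n + 3) + a (n + 2) + a (n + 1) := ha (n + 1)
  rw [h6, h5, h4, ha n]
  ring

def sumSqDefect (a : ℕ → R) (k : ℕ) : R :=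
  9 * a (k + 5) ^ 2 + 7 * a (k + 4) ^ 2 + 4 * a (k + 3) ^ 2 - 2 * a (k + 2) ^ 2
    - a (k + 1) ^ 2 - a k ^ 2 - 8 * ∑ j ∈ range (k + 6), a j ^ 2

theorem sumSqDefect_succ (ha : ∀ n, a (n + 3) = a (n + 2) + a (n + 1) + a n) (k : ℕ) :
    sumSqDefect a (k + 1) = sumSqDefect a k := by
  unfold sumSqDefect
  rw [sum_range_succ _ (k + 6), sq_add_six_of_tribonacci_rec ha k]
  ring

theorem sumSqDefect_eq_sumSqDefect_zero (ha : ∀ n, a (n + 3) = a (n + 2) + a (n + 1) + a n) (k : ℕ) :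
    sumSqDefect a k = sumSqDefect a 0 := by
  induction k with
  | zero => rfl
  | succ k ih => rw [sumSqDefect_succ ha, ih]

end TribonacciRecurrence

theorem stmt10 (T : ℕ → ℕ) (h0 : T 0 = 0) (h1 : T 1 = 1) (h2 : T 2 = 1) (hT : ∀ n, 3 ≤ n → T n = T (n-1) + T (n-2) + T (n-3)) :
    ∀ k, 5 ≤ k → 8*∑ j ∈ range (k+1), ((T j : ℤ))^2 = 9*(T k : ℤ)^2 + 7*(T (k-1) : ℤ)^2 + 4*(T (k-2) : ℤ)^2 - 2*(T (k-3) : ℤ)^2 - (T (k-4) : ℤ)^2 - (T (k-5) : ℤ)^2 + 2 := by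
  have hrec : ∀ n, T (n + 3) = T (n + 2) + T (n + 1) + T n := fun n => by
    simpa using hT (n + 3) (by omega)
  have hrecℤ : ∀ n, (T (n + 3) : ℤ) = T (n + 2) + T (n + 1) + T n := fun n => by
    exact_mod_cast hrec n
  have h3 : T 3 = 2 := by rw [hrec 0, h0, h1, h2]
  have h4 : T 4 = 4 := by rw [hrec 1, h1, h2, h3]
  have h5 : T 5 = 7 := by rw [hrec 2, h2, h3, h4]
  have hdefect0 : sumSqDefect (fun n => (T n : ℤ)) 0 = -2 := by
    simp [sumSqDefect, sum_range_succ, h0, h1, h2, h3, h4, h5]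
  intro k hk
  obtain ⟨m, rfl⟩ := Nat.exists_eq_add_of_le' hk
  have hm := sumSqDefect_eq_sumSqDefect_zero (a := fun n => (T n : ℤ)) hrecℤ m
  rw [hdefect0] at hm
  simp only [sumSqDefect] at hm
  simp only [Nat.reduceSubDiff, Nat.add_sub_cancel]
  linarith
end

section
/- For the Tribonacci sequence and any k ≥ 5: 8·∑_{j=0}^{k} (−1)^j·T(j)² = (−1)^k·(7·T(k)² − 5·T(k−1)² + 8·T(k−2)² − 2·T(k−3)² + T(k−4)² − T(k−5)²) − 2. -/
/-! Write `F k = 7 T(k)² - 5 T(k-1)² + 8 T(k-2)² - 2 T(k-3)² + T(k-4)² - T(k-5)²`. Eliminating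
`T(k+1)`, `T(k-3)`, `T(k-4)`, `T(k-5)` through the recurrence, `F (k+1) + F k = 8 T(k+1)²`
is a polynomial identity in `T(k-2), T(k-1), T(k)`. Hence `(-1)^k F k` telescopes against the
alternating sum, and the constant `-2` is read off at `k = 5`. -/

open Finset

/-- `tribSqForm T n` is `F (n + 5)`, shifted so that no natural-number subtraction occurs. -/
def tribSqForm (T : ℕ → ℤ) (n : ℕ) : ℤ :=
  7 * T (n + 5) ^ 2 - 5 * T (n + 4) ^ 2 + 8 * T (n + 3) ^ 2 - 2 * T (n + 2) ^ 2
    + T (n + 1) ^ 2 - T n ^ 2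

section

variable {T : ℕ → ℤ} (hT : ∀ n, T (n + 3) = T (n + 2) + T (n + 1) + T n)
include hT

theorem tribSqForm_succ_add_tribSqForm (n : ℕ) :
    tribSqForm T (n + 1) + tribSqForm T n = 8 * T (n + 6) ^ 2 := by
  have h6 := hT (n + 3)
  have h2 : T (n + 2) = T (n + 5) - T (n + 4) - T (n + 3) := by linarith [hT (n + 2)]
  have h1 : T (n + 1) = 2 * T (n + 4) - T (n + 5) := by linarith [hT (n + 1), hT (n + 2)]
  have h0 : T n = 2 * T (n + 3) - T (n + 4) := by linarith [hT n, hT (n + 1), hT (n + 2)]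
  simp only [tribSqForm, Nat.add_assoc, Nat.reduceAdd] at h6 ⊢
  rw [h6, h0, h1, h2]
  ring

theorem eight_mul_sum_alternating_sq_sub_tribSqForm (n : ℕ) :
    8 * ∑ j ∈ range (n + 6), (-1 : ℤ) ^ j * T j ^ 2 - (-1) ^ (n + 5) * tribSqForm T n
      = 8 * ∑ j ∈ range 6, (-1 : ℤ) ^ j * T j ^ 2 - (-1) ^ 5 * tribSqForm T 0 := by
  induction n with
  | zero => rfl
  | succ n ih =>
    rw [← ih, Finset.sum_range_succ]
    linear_combination (-1 : ℤ) ^ (n + 5) * tribSqForm_succ_add_tribSqForm hT n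

end

theorem stmt11 (T : ℕ → ℤ) (h0 : T 0 = 0) (h1 : T 1 = 1) (h2 : T 2 = 1) (hT : ∀ n, 3 ≤ n → T n = T (n-1) + T (n-2) + T (n-3)) :
    ∀ k, 5 ≤ k → 8*∑ j ∈ range (k+1), (-1:ℤ)^j * (T j)^2 = (-1)^k * (7*(T k)^2 - 5*(T (k-1))^2 + 8*(T (k-2))^2 - 2*(T (k-3))^2 + (T (k-4))^2 - (T (k-5))^2) - 2 := by
  intro k hk
  obtain ⟨n, rfl⟩ : ∃ n, k = n + 5 := ⟨k - 5, by omega⟩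
  have hrec : ∀ n, T (n + 3) = T (n + 2) + T (n + 1) + T n := fun n => by
    simpa using hT (n + 3) (by omega)
  have h3 : T 3 = 2 := by simp [hrec 0, h0, h1, h2]
  have h4 : T 4 = 4 := by simp [hrec 1, h1, h2, h3]
  have h5 : T 5 = 7 := by simp [hrec 2, h2, h3, h4]
  have base : 8 * ∑ j ∈ range 6, (-1 : ℤ) ^ j * T j ^ 2 - (-1) ^ 5 * tribSqForm T 0 = -2 := by
    simp [tribSqForm, Finset.sum_range_succ, h0, h1, h2, h3, h4, h5]
  have key := eight_mul_sum_alternating_sq_sub_tribSqForm hrec n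
  rw [base, tribSqForm] at key
  simp only [Nat.add_sub_cancel, Nat.reduceSubDiff]
  linear_combination key
end

section
/- For the Tribonacci sequence and any k ≥ 3: 8·∑_{j=0}^{k} T(2j)² = 8·T(2k)² + T(2k−1)² + 6·T(2k−2)² − 2·T(2k−3)² − T(2k−5)². -/
/-!
The squares `T(n)²` satisfy a linear recurrence of order six; with it, the right-hand side
increases by exactly `8 T(2k+2)²` from `k` to `k + 1`, so the identity follows by induction
from the case `k = 3`, which is a direct computation.
-/

open Finset

/-- The characteristic roots of this order-six recurrence are the products `αβ`, `α²` of roots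
of `x³ - x² - x - 1`. -/
theorem sq_add_six_of_tribonacci {R : Type*} [CommRing R] (u : ℕ → R)
    (hu : ∀ n, u (n + 3) = u (n + 2) + u (n + 1) + u n) (n : ℕ) :
    u (n + 6) ^ 2 = 2 * u (n + 5) ^ 2 + 3 * u (n + 4) ^ 2 + 6 * u (n + 3) ^ 2
      - u (n + 2) ^ 2 - u n ^ 2 := by
  have h3 : u (n + 3) = u (n + 2) + u (n + 1) + u n := hu n
  have h4 : u (n + 4) = u (n + 3) + u (n + 2) + u (n + 1) := hu (n + 1)
  have h5 : u (n + 5) = u (n + 4) + u (n + 3) + u (n + 2) := hu (n + 2)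
  have h6 : u (n + 6) = u (n + 5) + u (n + 4) + u (n + 3) := hu (n + 3)
  rw [h6, h5, h4, h3]
  ring

theorem eight_mul_sum_sq_even_tribonacci {R : Type*} [CommRing R] (u : ℕ → R)
    (h0 : u 0 = 0) (h1 : u 1 = 1) (h2 : u 2 = 1)
    (hu : ∀ n, u (n + 3) = u (n + 2) + u (n + 1) + u n) (m : ℕ) :
    8 * ∑ j ∈ range (m + 4), u (2 * j) ^ 2 = 8 * u (2 * m + 6) ^ 2 + u (2 * m + 5) ^ 2
      + 6 * u (2 * m + 4) ^ 2 - 2 * u (2 * m + 3) ^ 2 - u (2 * m + 1) ^ 2 := by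
  induction m with
  | zero =>
    have h3 : u 3 = 2 := by rw [hu 0, h0, h1, h2]; norm_num
    have h4 : u 4 = 4 := by rw [hu 1, h3, h1, h2]; norm_num
    have h5 : u 5 = 7 := by rw [hu 2, h4, h3, h2]; norm_num
    have h6 : u 6 = 13 := by rw [hu 3, h5, h4, h3]; norm_num
    simp only [sum_range_succ, sum_range_zero]
    norm_num [h0, h1, h2, h3, h4, h5, h6]
  | succ m ih =>
    rw [sum_range_succ, mul_add, ih]
    linear_combination (norm := ring_nf) -sq_add_six_of_tribonacci u hu (2 * m + 1)

theorem stmt12 (T : ℕ → ℤ) (h0 : T 0 = 0) (h1 : T 1 = 1) (h2 : T 2 = 1) (hT : ∀ n, 3 ≤ n → T n = T (n-1) + T (n-2) + T (n-3)) :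
    ∀ k, 3 ≤ k → 8*∑ j ∈ range (k+1), (T (2*j))^2 = 8*(T (2*k))^2 + (T (2*k-1))^2 + 6*(T (2*k-2))^2 - 2*(T (2*k-3))^2 - (T (2*k-5))^2 := by
  have hu : ∀ n, T (n + 3) = T (n + 2) + T (n + 1) + T n := fun n => hT (n + 3) (by omega)
  intro k hk
  obtain ⟨m, rfl⟩ := Nat.exists_eq_add_of_le' hk
  rw [show 2 * (m + 3) - 1 = 2 * m + 5 by omega, show 2 * (m + 3) - 2 = 2 * m + 4 by omega,
    show 2 * (m + 3) - 3 = 2 * m + 3 by omega, show 2 * (m + 3) - 5 = 2 * m + 1 by omega]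
  exact eight_mul_sum_sq_even_tribonacci T h0 h1 h2 hu m
end

section
/- For the Tribonacci sequence and any k ≥ 2: 8·∑_{j=1}^{k} T(2j−1)² = T(2k)² + 6·T(2k−1)² − 2·T(2k−2)² − T(2k−4)² + 2. -/
/-! With `F m = T(2m+4)² + 6 T(2m+3)² - 2 T(2m+2)² - T(2m)²`, the recurrence alone gives
`F (m+1) - F m = 8 T(2m+5)²` (a polynomial identity in three consecutive terms), so the sum
telescopes; the constant `2` is fixed by the case `k = 2`. -/

open Finset

section Tribonacci

variable {R : Type*} [CommRing R] {T : ℕ → R}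

theorem tribonacci_sq_combination_step (hT : ∀ n, T (n + 3) = T (n + 2) + T (n + 1) + T n)
    (n : ℕ) :
    T (n + 6) ^ 2 + 6 * T (n + 5) ^ 2 - 2 * T (n + 4) ^ 2 - T (n + 2) ^ 2 =
      T (n + 4) ^ 2 + 6 * T (n + 3) ^ 2 - 2 * T (n + 2) ^ 2 - T n ^ 2 + 8 * T (n + 5) ^ 2 := by
  simp only [hT]
  ring

theorem tribonacci_eight_mul_sum_sq_odd (h0 : T 0 = 0) (h1 : T 1 = 1) (h2 : T 2 = 1)
    (hT : ∀ n, T (n + 3) = T (n + 2) + T (n + 1) + T n) (m : ℕ) :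
    8 * ∑ j ∈ range (m + 2), T (2 * j + 1) ^ 2 =
      T (2 * m + 4) ^ 2 + 6 * T (2 * m + 3) ^ 2 - 2 * T (2 * m + 2) ^ 2 - T (2 * m) ^ 2 + 2 := by
  induction m with
  | zero =>
    simp only [sum_range_succ, sum_range_zero, hT, h0, h1, h2]
    norm_num
  | succ m ih =>
    rw [sum_range_succ, mul_add, ih, show 2 * (m + 1) = 2 * m + 2 by ring]
    linear_combination (tribonacci_sq_combination_step hT (2 * m)).symm

end Tribonacci

theorem stmt13 (T : ℕ → ℤ) (h0 : T 0 = 0) (h1 : T 1 = 1) (h2 : T 2 = 1) (hT : ∀ n, 3 ≤ n → T n = T (n-1) + T (n-2) + T (n-3)) :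
    ∀ k, 2 ≤ k → 8*∑ j ∈ Icc 1 k, (T (2*j-1))^2 = (T (2*k))^2 + 6*(T (2*k-1))^2 - 2*(T (2*k-2))^2 - (T (2*k-4))^2 + 2 := by
  intro k hk
  obtain ⟨m, rfl⟩ : ∃ m, k = m + 2 := ⟨k - 2, by omega⟩
  have hrec : ∀ n, T (n + 3) = T (n + 2) + T (n + 1) + T n := fun n => hT (n + 3) (by omega)
  have hsum : ∑ j ∈ Icc 1 (m + 2), T (2 * j - 1) ^ 2 = ∑ j ∈ range (m + 2), T (2 * j + 1) ^ 2 := by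
    rw [← Ico_add_one_right_eq_Icc, sum_Ico_eq_sum_range]
    exact sum_congr rfl fun j _ => by congr 2; omega
  rw [hsum, tribonacci_eight_mul_sum_sq_odd h0 h1 h2 hrec m]
  congr 5
end

section
/- For the Tribonacci sequence and any k ≥ 3: 8·∑_{j=1}^{k} (−1)^{j−1}·T(2j−1)² = (−1)^k·(T(2k)² − 9·T(2k−1)² − 6·T(2k−2)² + T(2k−4)² + T(2k−5)²) + 2. -/
/-!
Put `q n = T(n+5)² - 9 T(n+4)² - 6 T(n+3)² + T(n+1)² + T(n)²`, so that the bracket on the right is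
`q (2k-5)`. For any sequence obeying the Tribonacci recurrence, expressing everything through
`T n, T (n+1), T (n+2)` gives the quadratic identity `q n + q (n+2) = -8 T(n+6)²`. Hence adding the
term `(-1)^k T(2k+1)²` to the alternating sum is matched by the change of `(-1)^k q (2k-5)`, and
the difference of the two sides is a constant, which the initial values `0, 1, 1` make equal to `2`.
-/

open Finset

def tribQuad (T : ℕ → ℤ) (n : ℕ) : ℤ :=
  T (n+5)^2 - 9 * T (n+4)^2 - 6 * T (n+3)^2 + T (n+1)^2 + T n^2

section Recurrent

variable {T : ℕ → ℤ} (hrec : ∀ n, T (n+3) = T (n+2) + T (n+1) + T n)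
include hrec

theorem tribQuad_add_tribQuad (n : ℕ) : tribQuad T n + tribQuad T (n+2) = -8 * T (n+6)^2 := by
  have h3 := hrec n
  have h4 := hrec (n+1)
  have h5 := hrec (n+2)
  have h6 := hrec (n+3)
  have h7 := hrec (n+4)
  simp only [tribQuad]
  rw [h7, h6, h5, h4, h3]
  ring

theorem eight_mul_sum_alternating_odd_sq (m : ℕ) :
    8 * ∑ j ∈ Icc 1 (m+3), (-1:ℤ)^(j-1) * T (2*j-1)^2
      = (-1)^(m+1) * tribQuad T (2*m+1) + (tribQuad T 1 + 8 * (T 1^2 - T 3^2 + T 5^2)) := by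
  induction m with
  | zero =>
    rw [show Icc 1 3 = ({1, 2, 3} : Finset ℕ) from rfl]
    norm_num
    ring
  | succ m ih =>
    have step := tribQuad_add_tribQuad hrec (2*m+1)
    rw [show 2*m+1+2 = 2*(m+1)+1 by omega] at step
    rw [sum_Icc_succ_top (by omega), mul_add, ih,
      show m + 1 + 3 - 1 = m + 3 by omega, show 2 * (m + 1 + 3) - 1 = 2*m+1+6 by omega]
    linear_combination (-1:ℤ)^(m+1) * step

end Recurrent

theorem stmt15 (T : ℕ → ℤ) (h0 : T 0 = 0) (h1 : T 1 = 1) (h2 : T 2 = 1) (hT : ∀ n, 3 ≤ n → T n = T (n-1) + T (n-2) + T (n-3)) :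
    ∀ k, 3 ≤ k → 8*∑ j ∈ Icc 1 k, (-1:ℤ)^(j-1) * (T (2*j-1))^2 = (-1)^k * ((T (2*k))^2 - 9*(T (2*k-1))^2 - 6*(T (2*k-2))^2 + (T (2*k-4))^2 + (T (2*k-5))^2) + 2 := by
  have hrec : ∀ n, T (n+3) = T (n+2) + T (n+1) + T n := fun n => hT (n+3) (by omega)
  have t3 : T 3 = 2 := by simpa [h0, h1, h2] using hrec 0
  have t4 : T 4 = 4 := by simpa [h1, h2, t3] using hrec 1
  have t5 : T 5 = 7 := by simpa [h2, t3, t4] using hrec 2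
  have t6 : T 6 = 13 := by simpa [t3, t4, t5] using hrec 3
  intro k hk
  obtain ⟨m, rfl⟩ := Nat.exists_eq_add_of_le' hk
  rw [eight_mul_sum_alternating_odd_sq hrec, show 2*(m+3)-1 = 2*m+1+4 by omega,
    show 2*(m+3)-2 = 2*m+1+3 by omega, show 2*(m+3)-4 = 2*m+1+1 by omega,
    show 2*(m+3)-5 = 2*m+1 by omega, show 2*(m+3) = 2*m+1+5 by omega]
  simp only [tribQuad, h1, h2, t4, t5, t6, t3]
  ring
end

section
/- For the Tribonacci sequence and any k ≥ 1: 16·∑_{j=0}^{k} T(4j)² = 15·T(4k)² + 4·T(4k−1)² − 2·T(4k−3)² − T(4k−4)² + 2. -/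
open Finset

/-!
With `F m = 15 T(m+4)² + 4 T(m+3)² - 2 T(m+1)² - T(m)²`, unfolding the recurrence down to
`T m, T (m+1), T (m+2)` turns `F (m+4) - F m = 16 T(m+8)²` into a polynomial identity, so the
sum telescopes; the constant `2` is the value of the identity at `k = 1`.
-/

section
variable {R : Type*} [CommRing R] {T : ℕ → R}

theorem tribonacci_sq_telescope (hT : ∀ n, T (n + 3) = T (n + 2) + T (n + 1) + T n) (m : ℕ) :
    16 * T (m + 8) ^ 2 =
      (15 * T (m + 8) ^ 2 + 4 * T (m + 7) ^ 2 - 2 * T (m + 5) ^ 2 - T (m + 4) ^ 2) -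
        (15 * T (m + 4) ^ 2 + 4 * T (m + 3) ^ 2 - 2 * T (m + 1) ^ 2 - T m ^ 2) := by
  simp only [hT]
  ring

theorem tribonacci_sum_sq_four_mul (hT : ∀ n, T (n + 3) = T (n + 2) + T (n + 1) + T n)
    (h0 : T 0 = 0) (h1 : T 1 = 1) (h2 : T 2 = 1) (m : ℕ) :
    16 * ∑ j ∈ range (m + 2), T (4 * j) ^ 2 =
      15 * T (4 * m + 4) ^ 2 + 4 * T (4 * m + 3) ^ 2 - 2 * T (4 * m + 1) ^ 2 - T (4 * m) ^ 2 + 2 := by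
  induction m with
  | zero =>
    have h3 : T 3 = 2 := by rw [hT 0, h0, h1, h2]; norm_num
    have h4 : T 4 = 4 := by rw [hT 1, h1, h2, h3]; norm_num
    norm_num [sum_range_succ, h0, h1, h3, h4]
  | succ m ih =>
    rw [sum_range_succ, mul_add, ih]
    linear_combination tribonacci_sq_telescope hT (4 * m)
end

theorem stmt16 (T : ℕ → ℤ) (h0 : T 0 = 0) (h1 : T 1 = 1) (h2 : T 2 = 1) (hT : ∀ n, 3 ≤ n → T n = T (n-1) + T (n-2) + T (n-3)) :
    ∀ k, 1 ≤ k → 16*∑ j ∈ range (k+1), (T (4*j))^2 = 15*(T (4*k))^2 + 4*(T (4*k-1))^2 - 2*(T (4*k-3))^2 - (T (4*k-4))^2 + 2 := by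
  have hrec : ∀ n, T (n + 3) = T (n + 2) + T (n + 1) + T n := fun n => by
    simpa using hT (n + 3) (by omega)
  intro k hk
  obtain ⟨m, rfl⟩ : ∃ m, k = m + 1 := ⟨k - 1, by omega⟩
  have key := tribonacci_sum_sq_four_mul hrec h0 h1 h2 m
  rwa [show 4 * (m + 1) = 4 * m + 4 by ring, show 4 * m + 4 - 1 = 4 * m + 3 by omega,
    show 4 * m + 4 - 3 = 4 * m + 1 by omega, show 4 * m + 4 - 4 = 4 * m by omega]
end

section
/- For any sequence T satisfying the Tribonacci recurrence and any r ≥ 10: T(r)³ − 4·T(r−1)³ − 9·T(r−2)³ − 34·T(r−3)³ + 24·T(r−4)³ − 2·T(r−5)³ + 40·T(r−6)³ − 14·T(r−7)³ − T(r−8)³ − 2·T(r−9)³ + T(r−10)³ = 0. -/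
open Finset

theorem stmt19 (T : ℕ → ℤ) (hT : ∀ n, 3 ≤ n → T n = T (n-1) + T (n-2) + T (n-3)) :
    ∀ r, 10 ≤ r → (T r)^3 - 4*(T (r-1))^3 - 9*(T (r-2))^3 - 34*(T (r-3))^3 + 24*(T (r-4))^3 - 2*(T (r-5))^3 + 40*(T (r-6))^3 - 14*(T (r-7))^3 - (T (r-8))^3 - 2*(T (r-9))^3 + (T (r-10))^3 = 0 := by
  intro r hr
  obtain ⟨k, rfl⟩ : ∃ k, r = k + 10 := ⟨r - 10, by omega⟩
  have e : ∀ j : ℕ, T (k+j+3) = T (k+j+2) + T (k+j+1) + T (k+j) := by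
    intro j
    have h := hT (k+j+3) (by omega)
    have h1 : k+j+3-1 = k+j+2 := by omega
    have h2 : k+j+3-2 = k+j+1 := by omega
    have h3 : k+j+3-3 = k+j := by omega
    rw [h1, h2, h3] at h
    exact h
  have i1 : k+10-1 = k+9 := by omega
  have i2 : k+10-2 = k+8 := by omega
  have i3 : k+10-3 = k+7 := by omega
  have i4 : k+10-4 = k+6 := by omega
  have i5 : k+10-5 = k+5 := by omega
  have i6 : k+10-6 = k+4 := by omega
  have i7 : k+10-7 = k+3 := by omega
  have i8 : k+10-8 = k+2 := by omega
  have i9 : k+10-9 = k+1 := by omega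
  have i10 : k+10-10 = k := by omega
  rw [i1, i2, i3, i4, i5, i6, i7, i8, i9, i10]
  have h7 := e 7; have h6 := e 6; have h5 := e 5; have h4 := e 4
  have h3 := e 3; have h2 := e 2; have h1 := e 1; have h0 := e 0
  norm_num at h7 h6 h5 h4 h3 h2 h1 h0 ⊢
  rw [show k+10 = k+7+3 by omega] at h7
  rw [h7, h6, h5, h4, h3, h2, h1, h0]
  ring
end
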